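/- Let H be a finite simple graph with minimum degree δ(H) ≥ 1 and Q ⊆ V(H) a nonempty vertex set. Then there exists an ordering v_1, v_2, …, v_e of the vertices of V(H) \ Q such that, setting H_0 to be the induced subgraph on Q and H_{i} the induced subgraph on Q ∪ {v_1,…,v_i}, the sequence of minimum degrees satisfies δ(H_i) ≤ δ(H_{i+1}) for all 0 ≤ i < e, provided δ(H_0) = 0. -/

import Mathlib

/-!
Tear `V` down to `Q` one vertex at a time and read the removals backwards. From a set `S ⊋ Q`,
delete any vertex of `S \ Q` other than a fixed vertex `u` of minimum degree in `S`: the degree of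
`u` can only drop, so the minimum degree does not grow. If `u` is the only vertex of `S \ Q` left,
deleting it leaves `Q`, whose minimum degree is `0`.
-/

/-- Degree of `v` within the vertex set `S`. -/
def degIn {V : Type*} [DecidableEq V] (G : SimpleGraph V) [DecidableRel G.Adj]
    (S : Finset V) (v : V) : ℕ :=
  (S.filter fun u => G.Adj v u).card

/-- Minimum degree of the induced subgraph on `S` (0 for the empty set). -/
def minDeg {V : Type*} [DecidableEq V] (G : SimpleGraph V) [DecidableRel G.Adj]
    (S : Finset V) : ℕ :=
  ((S.image (degIn G S)).min).getD 0

def MonotonePrefixes {α β : Type*} [Preorder β] (f : List α → β) (l : List α) : Prop :=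
  ∀ i < l.length, f (l.take i) ≤ f (l.take (i + 1))

lemma monotonePrefixes_nil {α β : Type*} [Preorder β] (f : List α → β) :
    MonotonePrefixes f [] := by
  simp [MonotonePrefixes]

lemma MonotonePrefixes.append_singleton {α β : Type*} [Preorder β] {f : List α → β}
    {l : List α} {a : α} (hl : MonotonePrefixes f l) (ha : f l ≤ f (l ++ [a])) :
    MonotonePrefixes f (l ++ [a]) := by
  intro i hi
  rw [List.length_append, List.length_singleton] at hi
  rcases Nat.lt_or_ge i l.length with hlt | hge
  · rw [List.take_append_of_le_length hlt.le, List.take_append_of_le_length hlt]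
    exact hl i hlt
  · obtain rfl : i = l.length := by omega
    rw [List.take_append_of_le_length le_rfl, List.take_length,
      List.take_of_length_le (by simp)]
    exact ha

section MinDeg

variable {V : Type*} [DecidableEq V] (G : SimpleGraph V) [DecidableRel G.Adj]

lemma degIn_mono {S T : Finset V} (h : S ⊆ T) (v : V) : degIn G S v ≤ degIn G T v :=
  Finset.card_le_card (Finset.filter_subset_filter _ h)

lemma minDeg_eq_min' {S : Finset V} (hS : S.Nonempty) :
    minDeg G S = (S.image (degIn G S)).min' (hS.image _) := by
  rw [minDeg, ← Finset.coe_min' (hS.image _)]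
  rfl

lemma minDeg_le_degIn {S : Finset V} {v : V} (hv : v ∈ S) : minDeg G S ≤ degIn G S v := by
  rw [minDeg_eq_min' G ⟨v, hv⟩]
  exact Finset.min'_le _ _ (Finset.mem_image_of_mem _ hv)

lemma exists_degIn_eq_minDeg {S : Finset V} (hS : S.Nonempty) :
    ∃ u ∈ S, degIn G S u = minDeg G S := by
  rw [minDeg_eq_min' G hS]
  exact Finset.mem_image.1 (Finset.min'_mem _ _)

lemma exists_minDeg_erase_le {Q S : Finset V} (hQS : Q ⊆ S) (hSQ : (S \ Q).Nonempty)
    (hQ0 : minDeg G Q = 0) : ∃ v ∈ S \ Q, minDeg G (S.erase v) ≤ minDeg G S := by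
  obtain ⟨u, hu, hu_min⟩ := exists_degIn_eq_minDeg G (hSQ.mono Finset.sdiff_subset)
  rcases ((S \ Q).erase u).eq_empty_or_nonempty with hempty | ⟨w, hw⟩
  · obtain hSQ_empty | hSQ_u := (Finset.erase_eq_empty_iff _ _).1 hempty
    · exact absurd hSQ_empty hSQ.ne_empty
    · refine ⟨u, by simp [hSQ_u], ?_⟩
      rw [Finset.erase_eq, ← hSQ_u, Finset.sdiff_sdiff_eq_self hQS, hQ0]
      exact Nat.zero_le _
  · obtain ⟨hwu, hw⟩ := Finset.mem_erase.1 hw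
    refine ⟨w, hw, ?_⟩
    calc minDeg G (S.erase w) ≤ degIn G (S.erase w) u :=
          minDeg_le_degIn G (Finset.mem_erase.2 ⟨hwu.symm, hu⟩)
      _ ≤ degIn G S u := degIn_mono G (Finset.erase_subset _ _) u
      _ = minDeg G S := hu_min

lemma exists_monotone_buildup {Q : Finset V} (hQ0 : minDeg G Q = 0) (S : Finset V)
    (hQS : Q ⊆ S) : ∃ l : List V, l.Nodup ∧ l.toFinset = S \ Q ∧
      MonotonePrefixes (fun p => minDeg G (Q ∪ p.toFinset)) l := by
  induction S using Finset.strongInduction with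
  | H S ih =>
    rcases (S \ Q).eq_empty_or_nonempty with hSQ | hSQ
    · exact ⟨[], List.nodup_nil, by simp [hSQ], monotonePrefixes_nil _⟩
    obtain ⟨v, hv, hv_le⟩ := exists_minDeg_erase_le G hQS hSQ hQ0
    obtain ⟨hvS, hvQ⟩ := Finset.mem_sdiff.1 hv
    obtain ⟨l, hl_nodup, hl_set, hl_mono⟩ :=
      ih (S.erase v) (Finset.erase_ssubset hvS) (Finset.subset_erase.2 ⟨hQS, hvQ⟩)
    have hQl : Q ∪ l.toFinset = S.erase v := by
      rw [hl_set, Finset.union_sdiff_of_subset (Finset.subset_erase.2 ⟨hQS, hvQ⟩)]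
    have hvl : v ∉ l := fun h => by simpa [hl_set] using List.mem_toFinset.2 h
    have hQlv : Q ∪ (l ++ [v]).toFinset = S := by
      rw [List.toFinset_append, ← Finset.union_assoc, hQl]
      simpa using Finset.insert_erase hvS
    refine ⟨l ++ [v], hl_nodup.append (List.nodup_singleton v) (List.disjoint_singleton.2 hvl),
      ?_, hl_mono.append_singleton ?_⟩
    · rw [List.toFinset_append, hl_set]
      simpa [Finset.erase_sdiff_comm] using Finset.insert_erase hv
    · simp only [hQl, hQlv]
      exact hv_le

end MinDeg

theorem monotone_buildup_order_general {V : Type*} [Fintype V] [DecidableEq V]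
    (G : SimpleGraph V) [DecidableRel G.Adj]
    (Q : Finset V) (hQ0 : minDeg G Q = 0) :
    ∃ l : List V, l.Nodup ∧ (∀ v : V, v ∈ l ↔ v ∉ Q) ∧
      ∀ i < l.length,
        minDeg G (Q ∪ (l.take i).toFinset) ≤ minDeg G (Q ∪ (l.take (i + 1)).toFinset) := by
  obtain ⟨l, hl_nodup, hl_set, hl_mono⟩ :=
    exists_monotone_buildup G hQ0 Finset.univ (Finset.subset_univ Q)
  refine ⟨l, hl_nodup, fun v => ?_, hl_mono⟩
  simpa using congrArg (v ∈ ·) hl_set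

theorem monotone_buildup_order {V : Type*} [Fintype V] [DecidableEq V]
    (G : SimpleGraph V) [DecidableRel G.Adj]
    (Q : Finset V) (hQ : Q.Nonempty)
    (hδ : 1 ≤ minDeg G Finset.univ) (hQ0 : minDeg G Q = 0) :
    ∃ l : List V, l.Nodup ∧ (∀ v : V, v ∈ l ↔ v ∉ Q) ∧
      ∀ i < l.length,
        minDeg G (Q ∪ (l.take i).toFinset) ≤ minDeg G (Q ∪ (l.take (i + 1)).toFinset) :=
  monotone_buildup_order_general G Q hQ0
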